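/- arXiv:2303.05765 — 4 statements merged into one kernel-verified Lean document; each statement's English description precedes it below -/
import Mathlib

section
/- Let 𝒱 be a variety of groups defined by a set of words V, and let H be a group with a subgroup A such that A ≤ V*(H) (A is marginal in H) and A ∩ T(H) = {1} (A is a VP subgroup). If G ≅ H/A, then the group V(H) ∩ A is a homomorphic image (i.e., isomorphic to a quotient) of 𝒱B̃₀(G). -/
/-! Common framework: varieties of groups, verbal and marginal subgroups,
word values, the `B̃₀`-invariant of a group with respect to a variety. -/

universe u v

open scoped commutatorElement

/-- The set `T(G)` of values in `G` of the words in `V`. -/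
def wordValues (V : Set (FreeGroup ℕ)) (G : Type*) [Group G] : Set G :=
  {g | ∃ v ∈ V, ∃ f : ℕ → G, FreeGroup.lift f v = g}

/-- The verbal subgroup `V(G)`, generated by all values in `G` of words of `V`. -/
def verbal (V : Set (FreeGroup ℕ)) (G : Type*) [Group G] : Subgroup G :=
  Subgroup.closure (wordValues V G)

/-- The verbal subgroup `V(B)` of a subgroup `B` of `G`, viewed as a subgroup of `G`:
it is generated by all values of words of `V` at tuples of elements of `B`. -/
def verbalOn (V : Set (FreeGroup ℕ)) {G : Type*} [Group G] (B : Subgroup G) : Subgroup G :=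
  Subgroup.closure {g | ∃ v ∈ V, ∃ f : ℕ → G, (∀ n, f n ∈ B) ∧ FreeGroup.lift f v = g}

/-- The marginal subgroup `V*(G)`: those `a` such that replacing any entry `gᵢ` of any tuple
by `gᵢ * a` does not change the value of any word of `V`. -/
def marginal (V : Set (FreeGroup ℕ)) (G : Type*) [Group G] : Subgroup G where
  carrier := {a | ∀ v ∈ V, ∀ f : ℕ → G, ∀ i : ℕ,
    FreeGroup.lift (Function.update f i (f i * a)) v = FreeGroup.lift f v}
  one_mem' := by
    intro v hv f i
    rw [mul_one, Function.update_eq_self]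
  mul_mem' := by
    intro a b ha hb v hv f i
    have h1 := hb v hv (Function.update f i (f i * a)) i
    rw [Function.update_self, Function.update_idem] at h1
    rw [← mul_assoc]
    exact h1.trans (ha v hv f i)
  inv_mem' := by
    intro a ha v hv f i
    have h1 := ha v hv (Function.update f i (f i * a⁻¹)) i
    rw [Function.update_self, Function.update_idem, inv_mul_cancel_right,
      Function.update_eq_self] at h1
    exact h1.symm

lemma FreeGroup.lift_conj {α : Type*} {G : Type*} [Group G] (f : α → G) (c : G)
    (w : FreeGroup α) :
    FreeGroup.lift (fun n => c * f n * c⁻¹) w = c * FreeGroup.lift f w * c⁻¹ := by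
  have h : (FreeGroup.lift (fun n => c * f n * c⁻¹) : FreeGroup α →* G)
      = ((MulAut.conj c).toMonoidHom.comp (FreeGroup.lift f)) := by
    apply FreeGroup.ext_hom
    intro a
    simp
  rw [h]
  simp

lemma Subgroup.closure_normal_of_conj {G : Type*} [Group G] {S : Set G}
    (hS : ∀ c : G, ∀ g ∈ S, c * g * c⁻¹ ∈ S) : (Subgroup.closure S).Normal := by
  constructor
  intro x hx c
  induction hx using Subgroup.closure_induction with
  | mem g hg => exact Subgroup.subset_closure (hS c g hg)
  | one => simpa using (Subgroup.closure S).one_mem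
  | mul a b _ _ pa pb =>
      have h : c * (a * b) * c⁻¹ = (c * a * c⁻¹) * (c * b * c⁻¹) := by group
      rw [h]; exact mul_mem pa pb
  | inv a _ pa =>
      have h : c * a⁻¹ * c⁻¹ = (c * a * c⁻¹)⁻¹ := by group
      rw [h]; exact inv_mem pa

lemma wordValues_conj_mem {V : Set (FreeGroup ℕ)} {G : Type*} [Group G]
    (c : G) {g : G} (hg : g ∈ wordValues V G) : c * g * c⁻¹ ∈ wordValues V G := by
  obtain ⟨v, hv, f, rfl⟩ := hg
  exact ⟨v, hv, fun n => c * f n * c⁻¹, FreeGroup.lift_conj f c v⟩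

/-- The canonical free presentation `1 → R → F → G → 1` of `G`, with
`F = FreeGroup G` the free group on the underlying set of `G`. -/
def presHom (G : Type*) [Group G] : FreeGroup G →* G := FreeGroup.lift id

/-- The relation subgroup `R` of the canonical free presentation of `G`. -/
def presKer (G : Type*) [Group G] : Subgroup (FreeGroup G) := (presHom G).ker

/-- The numerator `R ∩ V(F)` of the `B̃₀`-invariant. -/
def vB0Num (V : Set (FreeGroup ℕ)) (G : Type*) [Group G] : Subgroup (FreeGroup G) :=
  presKer G ⊓ verbal V (FreeGroup G)

/-- The denominator `⟨T(F) ∩ R⟩` of the `B̃₀`-invariant. -/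
def vB0Den (V : Set (FreeGroup ℕ)) (G : Type*) [Group G] : Subgroup (FreeGroup G) :=
  Subgroup.closure (wordValues V (FreeGroup G) ∩ (presKer G : Set (FreeGroup G)))

lemma vB0Den_normal (V : Set (FreeGroup ℕ)) (G : Type*) [Group G] : (vB0Den V G).Normal := by
  apply Subgroup.closure_normal_of_conj
  rintro c g ⟨hg1, hg2⟩
  exact ⟨wordValues_conj_mem c hg1, (presHom G).normal_ker.conj_mem g hg2 c⟩

instance vB0DenSubgroupOf_normal (V : Set (FreeGroup ℕ)) (G : Type*) [Group G] :
    ((vB0Den V G).subgroupOf (vB0Num V G)).Normal :=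
  (vB0Den_normal V G).subgroupOf _

/-- The `B̃₀`-invariant `𝒱B̃₀(G) = (R ∩ V(F)) / ⟨T(F) ∩ R⟩` of `G` with respect to the
variety defined by the set of words `V`, computed from the canonical free presentation. -/
def vB0 (V : Set (FreeGroup ℕ)) (G : Type*) [Group G] : Type _ :=
  ↥(vB0Num V G) ⧸ (vB0Den V G).subgroupOf (vB0Num V G)

instance (V : Set (FreeGroup ℕ)) (G : Type*) [Group G] : Group (vB0 V G) :=
  inferInstanceAs (Group (↥(vB0Num V G) ⧸ (vB0Den V G).subgroupOf (vB0Num V G)))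

/-- A variety defined by a set of words `V` is a Schur-Baer variety if, for every group `G`
whose marginal factor `G/V*(G)` is finite (of order `m = [G : V*(G)]`), the verbal subgroup
`V(G)` is finite of order dividing a power of `m`. -/
def IsSchurBaer (V : Set (FreeGroup ℕ)) : Prop :=
  ∀ (G : Type u) [Group G], (marginal V G).FiniteIndex →
    Finite (verbal V G) ∧ ∃ k : ℕ, Nat.card (verbal V G) ∣ (marginal V G).index ^ k

/-- Outer commutator words: `IsOCWord a b w` means that `w` is an outer commutator word
in the (distinct) variables `x_a, x_{a+1}, …, x_{b-1}` (so of weight `b - a`).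
`IsOCWord 0 r w` means `w = w(x₁,…,x_r)` is an outer commutator word of weight `r`. -/
inductive IsOCWord : ℕ → ℕ → FreeGroup ℕ → Prop
  | var (i : ℕ) : IsOCWord i (i + 1) (FreeGroup.of i)
  | comm {a b c : ℕ} {u v : FreeGroup ℕ} :
      IsOCWord a b u → IsOCWord b c v → IsOCWord a c ⁅u, v⁆

/-- Given an outer commutator word `w = w(x₁,…,x_r)` (in variables `x_0,…,x_{r-1}`),
the set of laws `{[w(x₁,…,x_r), x_{r+1}, x_{r+2}]}` defining the
center-by-center-by-`w` variety. -/
def ocVariety (w : FreeGroup ℕ) (r : ℕ) : Set (FreeGroup ℕ) :=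
  {⁅⁅w, FreeGroup.of r⁆, FreeGroup.of (r + 1)⁆}

/-- The lifting condition of a VP extension: any trivial word (a value of a word of `V`
which equals `1`) of elements of the quotient has a trivial lift. -/
def HasVPLifts (V : Set (FreeGroup ℕ)) {G Q : Type*} [Group G] [Group Q] (π : G →* Q) : Prop :=
  ∀ v ∈ V, ∀ q : ℕ → Q, FreeGroup.lift q v = 1 →
    ∃ g : ℕ → G, (∀ i, π (g i) = q i) ∧ FreeGroup.lift g v = 1

/-- `1 → L → G* → Q → 1` is a VP cover of `Q` (with respect to the variety defined by `V`):
a `𝒱`-stem marginal VP extension with `L ≅ 𝒱B̃₀(Q)`. Here `L` is realized as a subgroup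
of `G*` and `π : G* → Q` is the projection. -/
structure IsVPCover (V : Set (FreeGroup ℕ)) {Gs : Type*} {Q : Type*} [Group Gs] [Group Q]
    (L : Subgroup Gs) (π : Gs →* Q) : Prop where
  surj : Function.Surjective π
  ker_eq : π.ker = L
  marginal_le : L ≤ marginal V Gs
  stem : L ≤ verbal V Gs
  lifts : HasVPLifts V π
  iso : Nonempty (L ≃* vB0 V Q)

/-- The single commutator word `[x₁, x₂]` defining the variety of abelian groups. -/
def commutatorWord : Set (FreeGroup ℕ) := {⁅FreeGroup.of 0, FreeGroup.of 1⁆}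

/-- The Bogomolov multiplier `B̃₀(G) = (R ∩ [F,F]) / ⟨K(F) ∩ R⟩`: the `B̃₀`-invariant with
respect to the variety of abelian groups (then the verbal subgroup of the free group `F` is
its derived subgroup `[F,F]` and the set of word values is the set `K(F)` of commutators). -/
def B0tilde (G : Type*) [Group G] : Type _ := vB0 commutatorWord G

instance (G : Type*) [Group G] : Group (B0tilde G) := inferInstanceAs (Group (vB0 commutatorWord G))


/-! The map `θ : F → H` lifting the canonical presentation `F → G` through `H → H/A ≅ G`
sends `R` into `A`, `V(F)` into `V(H)`, and hence `T(F) ∩ R` into `T(H) ∩ A = 1`; so it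
induces `𝒱B̃₀(G) → V(H) ∩ A`. It is onto because `θ` is onto modulo `A` and `A` is
marginal: a value `v(h₁,…,h_s)` equals `v(θ k₁,…,θ k_s)` when `θ kᵢ ≡ hᵢ mod A`, so
`V(H) = θ(V(F))`, and an element of `V(H) ∩ A` pulled back to `V(F)` lies in `R`. -/

lemma FreeGroup.lift_eq_of_forall_mem_toWord {α G : Type*} [DecidableEq α] [Group G]
    {f g : α → G} {v : FreeGroup α} (h : ∀ p ∈ v.toWord, f p.1 = g p.1) :
    FreeGroup.lift f v = FreeGroup.lift g v := by
  rw [← FreeGroup.mk_toWord (x := v), FreeGroup.lift_mk, FreeGroup.lift_mk]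
  exact congrArg _ (List.map_congr_left fun p hp => by rw [h p hp])

section Marginal

variable {V : Set (FreeGroup ℕ)} {H : Type*} [Group H] {v : FreeGroup ℕ}

lemma lift_ite_mul_eq_of_mem_marginal (hv : v ∈ V) (f a : ℕ → H)
    (ha : ∀ n, a n ∈ marginal V H) (s : Finset ℕ) :
    FreeGroup.lift (fun n => if n ∈ s then f n * a n else f n) v = FreeGroup.lift f v := by
  classical
  induction s using Finset.induction_on with
  | empty => simp
  | @insert i s his ih =>
    set g : ℕ → H := fun n => if n ∈ s then f n * a n else f n
    have hupdate : (fun n => if n ∈ insert i s then f n * a n else f n)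
        = Function.update g i (g i * a i) := by
      funext n
      by_cases hn : n = i
      · subst hn; simp [g, his]
      · simp [g, hn]
    rw [hupdate, ha i v hv g i, ih]

lemma lift_mul_eq_of_mem_marginal (hv : v ∈ V) (f a : ℕ → H) (ha : ∀ n, a n ∈ marginal V H) :
    FreeGroup.lift (fun n => f n * a n) v = FreeGroup.lift f v := by
  classical
  let s : Finset ℕ := (v.toWord.map Prod.fst).toFinset
  rw [← lift_ite_mul_eq_of_mem_marginal hv f a ha s]
  refine FreeGroup.lift_eq_of_forall_mem_toWord fun p hp => ?_
  have hps : p.1 ∈ s := List.mem_toFinset.2 (List.mem_map_of_mem hp)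
  simp [hps]

end Marginal

section Verbal

variable {V : Set (FreeGroup ℕ)} {K H : Type*} [Group K] [Group H]

lemma image_wordValues_subset (θ : K →* H) : θ '' wordValues V K ⊆ wordValues V H := by
  rintro _ ⟨_, ⟨v, hv, f, rfl⟩, rfl⟩
  exact ⟨v, hv, θ ∘ f, (FreeGroup.lift_unique (θ.comp (FreeGroup.lift f)) (by simp)).symm⟩

lemma map_verbal_le (θ : K →* H) : (verbal V K).map θ ≤ verbal V H := by
  rw [verbal, MonoidHom.map_closure]
  exact Subgroup.closure_mono (image_wordValues_subset θ)

lemma wordValues_subset_image_of_le_marginal {A : Subgroup H} (hA : A ≤ marginal V H)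
    (θ : K →* H) (hθ : ∀ h, ∃ k, (θ k)⁻¹ * h ∈ A) : wordValues V H ⊆ θ '' wordValues V K := by
  rintro _ ⟨v, hv, f, rfl⟩
  choose k hk using fun n => hθ (f n)
  refine ⟨FreeGroup.lift k v, ⟨v, hv, k, rfl⟩, ?_⟩
  calc θ (FreeGroup.lift k v) = FreeGroup.lift (fun n => θ (k n)) v :=
        FreeGroup.lift_unique (θ.comp (FreeGroup.lift k)) (by simp)
    _ = FreeGroup.lift (fun n => θ (k n) * ((θ (k n))⁻¹ * f n)) v :=
        (lift_mul_eq_of_mem_marginal hv _ _ fun n => hA (hk n)).symm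
    _ = FreeGroup.lift f v := by simp

lemma verbal_le_map_of_le_marginal {A : Subgroup H} (hA : A ≤ marginal V H)
    (θ : K →* H) (hθ : ∀ h, ∃ k, (θ k)⁻¹ * h ∈ A) : verbal V H ≤ (verbal V K).map θ := by
  rw [verbal, verbal, MonoidHom.map_closure]
  exact Subgroup.closure_mono (wordValues_subset_image_of_le_marginal hA θ hθ)

end Verbal

section Presentation

variable {V : Set (FreeGroup ℕ)} {H G : Type*} [Group H] [Group G] (π : H →* G)
  (θ : FreeGroup G →* H)

lemma map_vB0Num_le (hθ : ∀ w, π (θ w) = presHom G w) :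
    (vB0Num V G).map θ ≤ verbal V H ⊓ π.ker := by
  rintro _ ⟨w, ⟨hR, hV⟩, rfl⟩
  exact ⟨map_verbal_le θ ⟨w, hV, rfl⟩, show π (θ w) = 1 by rw [hθ]; exact hR⟩

lemma vB0Den_le_ker (hθ : ∀ w, π (θ w) = presHom G w)
    (hVP : ∀ x ∈ π.ker, x ∈ wordValues V H → x = 1) : vB0Den V G ≤ θ.ker := by
  refine (Subgroup.closure_le _).2 fun w ⟨hT, hR⟩ =>
    hVP _ ?_ (image_wordValues_subset θ ⟨w, hT, rfl⟩)
  show π (θ w) = 1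
  rw [hθ]; exact hR

def vB0ToVerbalInfKer (hθ : ∀ w, π (θ w) = presHom G w)
    (hVP : ∀ x ∈ π.ker, x ∈ wordValues V H → x = 1) : vB0 V G →* ↥(verbal V H ⊓ π.ker) :=
  QuotientGroup.lift _
    ((θ.comp (vB0Num V G).subtype).codRestrict _
      fun w => map_vB0Num_le π θ hθ ⟨w, w.2, rfl⟩)
    fun _ hw => Subtype.ext (vB0Den_le_ker π θ hθ hVP (Subgroup.mem_subgroupOf.1 hw))

lemma vB0ToVerbalInfKer_surjective (hθ : ∀ w, π (θ w) = presHom G w)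
    (hVP : ∀ x ∈ π.ker, x ∈ wordValues V H → x = 1) (hmarg : π.ker ≤ marginal V H) :
    Function.Surjective (vB0ToVerbalInfKer π θ hθ hVP) := by
  rintro ⟨x, hxV, hxA⟩
  have hθ_onto_mod_ker : ∀ h, ∃ k, (θ k)⁻¹ * h ∈ π.ker := fun h =>
    ⟨FreeGroup.of (π h), by simp [MonoidHom.mem_ker, hθ, presHom]⟩
  obtain ⟨w, hwV, rfl⟩ := verbal_le_map_of_le_marginal hmarg θ hθ_onto_mod_ker hxV
  have hwR : w ∈ presKer G := by
    rw [presKer, MonoidHom.mem_ker, ← hθ]; exact hxA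
  exact ⟨QuotientGroup.mk ⟨w, hwR, hwV⟩, rfl⟩

end Presentation

theorem exists_surjective_vB0_verbal_inf_ker (V : Set (FreeGroup ℕ)) {H G : Type*}
    [Group H] [Group G] (π : H →* G) (hπ : Function.Surjective π)
    (hmarg : π.ker ≤ marginal V H) (hVP : ∀ x ∈ π.ker, x ∈ wordValues V H → x = 1) :
    ∃ φ : vB0 V G →* ↥(verbal V H ⊓ π.ker), Function.Surjective φ := by
  let θ : FreeGroup G →* H := FreeGroup.lift (Function.surjInv hπ)
  have hθ : ∀ w, π (θ w) = presHom G w := fun w =>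
    DFunLike.congr_fun (FreeGroup.ext_hom (f := π.comp θ) (g := presHom G)
      fun g => by simp [θ, presHom, Function.surjInv_eq hπ]) w
  exact ⟨_, vB0ToVerbalInfKer_surjective π θ hθ hVP hmarg⟩

/-- Lemma 3.1. Let `𝒱` be a variety defined by a set of words `V`, and
`A` a marginal VP subgroup of `H` (`A ≤ V*(H)` and `A ∩ T(H) = 1`). If `G ≅ H/A`, then
`V(H) ∩ A` is a homomorphic image of `𝒱B̃₀(G)`. -/
theorem stmt0 (V : Set (FreeGroup ℕ)) {H : Type u} {G : Type v} [Group H] [Group G]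
    (A : Subgroup H) [A.Normal]
    (hmarg : A ≤ marginal V H)
    (hVP : ∀ x ∈ A, x ∈ wordValues V H → x = 1)
    (hiso : Nonempty (G ≃* H ⧸ A)) :
    ∃ φ : vB0 V G →* ↥(verbal V H ⊓ A), Function.Surjective φ := by
  obtain ⟨ι⟩ := hiso
  let π : H →* G := (ι.symm : H ⧸ A →* G).comp (QuotientGroup.mk' A)
  have hker : π.ker = A := by
    rw [MonoidHom.ker_mulEquiv_comp, QuotientGroup.ker_mk']
  have hπ : Function.Surjective π := ι.symm.surjective.comp (QuotientGroup.mk'_surjective A)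
  have h := exists_surjective_vB0_verbal_inf_ker V π hπ (hker ▸ hmarg) (hker ▸ hVP)
  rwa [hker] at h
end

section
/- Let w = w(x₁,…,x_r) be an outer commutator word and let 𝒱 be the variety of groups defined by the single word [w(x₁,…,x_r), x_{r+1}, x_{r+2}]. Let B be a subgroup of finite index n in a group E. If x ∈ V*(E) ∩ V(E), then for all y₁,…,y_r ∈ B one has [w(y₁,…,y_r), xⁿ] ∈ V(B). In particular, if L ⊆ V*(E) ∩ V(E), then [W(B), Lⁿ] ⊆ V(B), where W(B) is the verbal subgroup of B with respect to w and Lⁿ is the subgroup generated by n-th powers of elements of L. -/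
/-! Common framework: varieties of groups, verbal and marginal subgroups,
word values, the `B̃₀`-invariant of a group with respect to a variety. -/

universe u v

open scoped commutatorElement

/-! Fix `u = w(f)` with all `f i ∈ B`, let `V(B)` be the verbal subgroup of `B` for the law
`[w, x_{r+1}, x_{r+2}]` and put `P = B ⋅ V*(E)`. Modulo `V(B)`, marginal factors can be dropped
from both slots of `⁅⁅u, p⁆, q⁆`, so for `p, q ∈ P` this element lies in `V(B)`, which `P`
normalises; hence `p ↦ ⁅u, p⁆` is a homomorphism from `P` into the centre of `P / V(B)`.
As `x` is marginal, `u` commutes with `⁅x, E⁆`, so this homomorphism takes the same value on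
`x ^ k` and on all its conjugates lying in `P`. The transfer into this abelian group therefore
maps `x` to the image of `x ^ [E : P]`, and it is trivial on `x ∈ V(E) ≤ [E, E]`. Thus
`⁅u, x ^ [E : P]⁆ ∈ V(B)`; since `⁅u, x⁆` is central, `⁅u, x ^ n⁆ = ⁅u, x⁆ ^ n`, and
`[E : P]` divides `n`. The statement about `L` follows because `B` and `V*(E)` both
normalise `V(B)`. -/
open Subgroup Function

theorem MonoidHom.transfer_eq_pow_index_of_map_conj {G : Type*} [Group G] {H : Subgroup G}
    {A : Type*} [CommGroup A] (ϕ : H →* A) [H.FiniteIndex] {g : G} (hg : g ∈ H)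
    (hconj : ∀ (k : ℕ) (g₀ : G) (hk : g₀⁻¹ * g ^ k * g₀ ∈ H),
      ϕ ⟨g₀⁻¹ * g ^ k * g₀, hk⟩ = ϕ ⟨g, hg⟩ ^ k) :
    ϕ.transfer g = ϕ ⟨g, hg⟩ ^ H.index := by
  classical
  let := H.fintypeQuotientOfFiniteIndex
  rw [transfer_eq_prod_quotient_orbitRel_zpowers_quot, index_eq_sum_minimalPeriod H g,
    ← Finset.prod_pow_eq_pow_sum]
  exact Finset.prod_congr rfl fun q _ => hconj _ _ _

theorem MonoidHom.map_pow_index_eq_one_of_mem_commutator {G : Type*} [Group G]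
    {H : Subgroup G} {A : Type*} [CommGroup A] (ϕ : H →* A) [H.FiniteIndex] {g : G}
    (hg : g ∈ H) (hgG : g ∈ commutator G)
    (hconj : ∀ (k : ℕ) (g₀ : G) (hk : g₀⁻¹ * g ^ k * g₀ ∈ H),
      ϕ ⟨g₀⁻¹ * g ^ k * g₀, hk⟩ = ϕ ⟨g, hg⟩ ^ k) :
    ϕ ⟨g, hg⟩ ^ H.index = 1 := by
  rw [← ϕ.transfer_eq_pow_index_of_map_conj hg hconj]
  exact Abelianization.commutator_subset_ker ϕ.transfer hgG

section CommutatorHom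

variable {G : Type*} [Group G]

theorem commutatorElement_mul_right_of_commute {a b c : G} (h : Commute a c) :
    ⁅a, b * c⁆ = ⁅a, b⁆ := by
  calc ⁅a, b * c⁆ = a * b * (c * a⁻¹) * c⁻¹ * b⁻¹ := by group
    _ = a * b * (a⁻¹ * c) * c⁻¹ * b⁻¹ := by rw [h.inv_left.eq]
    _ = ⁅a, b⁆ := by group

theorem commutatorElement_pow_right_of_commute {a x : G} (h : Commute ⁅a, x⁆ x) (k : ℕ) :
    ⁅a, x ^ k⁆ = ⁅a, x⁆ ^ k := by
  induction k with
  | zero => simp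
  | succ k ih =>
    have hsplit : ⁅a, x ^ k * x⁆ = ⁅a, x ^ k⁆ * (x ^ k * ⁅a, x⁆ * (x ^ k)⁻¹) := by
      simp only [commutatorElement_def]; group
    rw [pow_succ, hsplit, ih, (h.symm.pow_left k).eq, mul_inv_cancel_right, pow_succ]

variable (N : Subgroup G) [N.Normal] {u : G} (hu : ∀ p q : G, ⁅⁅u, p⁆, q⁆ ∈ N)
include hu

theorem mk_commutatorElement_mem_center (p : G) :
    (QuotientGroup.mk ⁅u, p⁆ : G ⧸ N) ∈ center (G ⧸ N) := by
  rw [mem_center_iff]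
  intro q
  induction q using QuotientGroup.induction_on with
  | H q =>
    have hcomm : ⁅QuotientGroup.mk' N ⁅u, p⁆, QuotientGroup.mk' N q⁆ = 1 := by
      rw [← map_commutatorElement, QuotientGroup.mk'_apply, QuotientGroup.eq_one_iff]
      exact hu p q
    exact (commutatorElement_eq_one_iff_commute.mp hcomm).symm.eq

def commutatorHomCenter : G →* center (G ⧸ N) where
  toFun p := ⟨QuotientGroup.mk ⁅u, p⁆, mk_commutatorElement_mem_center N hu p⟩
  map_one' := by ext; simp
  map_mul' p q := by
    ext
    have hsplit : ⁅u, p * q⁆ = ⁅u, p⁆ * (p * ⁅u, q⁆ * p⁻¹) := by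
      simp only [commutatorElement_def]; group
    have hcentral := mem_center_iff.mp (mk_commutatorElement_mem_center N hu q)
    change QuotientGroup.mk (s := N) ⁅u, p * q⁆
      = QuotientGroup.mk ⁅u, p⁆ * QuotientGroup.mk ⁅u, q⁆
    rw [hsplit, QuotientGroup.mk_mul, QuotientGroup.mk_mul, QuotientGroup.mk_mul,
      hcentral, QuotientGroup.mk_inv, mul_inv_cancel_right]

theorem commutatorHomCenter_eq_one_iff (p : G) :
    commutatorHomCenter N hu p = 1 ↔ ⁅u, p⁆ ∈ N := by
  rw [← QuotientGroup.eq_one_iff, ← Subtype.val_inj]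
  rfl

end CommutatorHom

theorem IsOCWord.le {a b : ℕ} {w : FreeGroup ℕ} (h : IsOCWord a b w) : a ≤ b := by
  induction h with
  | var i => exact i.le_succ
  | comm _ _ ih₁ ih₂ => exact ih₁.trans ih₂

theorem IsOCWord.lift_update {G : Type*} [Group G] {a b : ℕ} {w : FreeGroup ℕ}
    (h : IsOCWord a b w) (f : ℕ → G) {i : ℕ} (hi : b ≤ i) (z : G) :
    FreeGroup.lift (update f i z) w = FreeGroup.lift f w := by
  induction h with
  | var j => rw [FreeGroup.lift_apply_of, FreeGroup.lift_apply_of, update_of_ne (by omega)]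
  | comm _ hv ihu ihv =>
    rw [map_commutatorElement, map_commutatorElement, ihu (hv.le.trans hi), ihv hi]

theorem FreeGroup.lift_mem {α G : Type*} [Group G] {B : Subgroup G} {f : α → G}
    (hf : ∀ i, f i ∈ B) (v : FreeGroup α) : FreeGroup.lift f v ∈ B :=
  FreeGroup.range_lift_le (Set.range_subset_iff.2 hf) ⟨v, rfl⟩

section Verbal

variable {G : Type*} [Group G] (V : Set (FreeGroup ℕ))

theorem verbalOn_le_verbal (B : Subgroup G) : verbalOn V B ≤ verbal V G :=
  closure_mono fun _ ⟨v, hv, f, _, hfv⟩ => ⟨v, hv, f, hfv⟩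

theorem verbalOn_le (B : Subgroup G) : verbalOn V B ≤ B :=
  (closure_le B).2 fun _ ⟨_, _, _, hf, hfv⟩ => hfv ▸ FreeGroup.lift_mem hf _

theorem le_normalizer_verbalOn (B : Subgroup G) : B ≤ normalizer (verbalOn V B : Set G) :=
  le_normalizer_closure_iff.2 fun b hb _ ⟨v, hv, f, hf, hfv⟩ => subset_closure
    ⟨v, hv, fun i => b * f i * b⁻¹, fun i => mul_mem (mul_mem hb (hf i)) (inv_mem hb),
      by rw [FreeGroup.lift_conj, hfv]⟩

theorem marginal_normal : (marginal V G).Normal := by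
  refine ⟨fun a ha g v hv f i => ?_⟩
  have hconj : update f i (f i * (g * a * g⁻¹))
      = fun j => g * update (fun j => g⁻¹ * f j * g) i (g⁻¹ * f i * g * a) j * g⁻¹ := by
    funext j
    rcases eq_or_ne j i with rfl | hne
    · rw [update_self, update_self]; group
    · rw [update_of_ne hne, update_of_ne hne]; group
  have hf : f = fun j => g * (g⁻¹ * f j * g) * g⁻¹ := by funext j; group
  rw [hconj, FreeGroup.lift_conj, ha v hv _ i]
  conv_rhs => rw [hf, FreeGroup.lift_conj]

end Verbal

section OCVariety

variable {G : Type*} [Group G] {w : FreeGroup ℕ} {r : ℕ}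

theorem lift_ocVariety_law (f : ℕ → G) :
    FreeGroup.lift f ⁅⁅w, FreeGroup.of r⁆, FreeGroup.of (r + 1)⁆
      = ⁅⁅FreeGroup.lift f w, f r⁆, f (r + 1)⁆ := by
  rw [map_commutatorElement, map_commutatorElement, FreeGroup.lift_apply_of,
    FreeGroup.lift_apply_of]

theorem verbal_ocVariety_le_commutator : verbal (ocVariety w r) G ≤ commutator G :=
  (closure_le _).2 fun _ ⟨_, hv, f, hfv⟩ => by
    rw [← hfv, hv, lift_ocVariety_law]
    exact commutator_mem_commutator (mem_top _) (mem_top _)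

variable (hw : IsOCWord 0 r w)
include hw

theorem lift_update_update_ocVariety_law (f : ℕ → G) (a b : G) :
    FreeGroup.lift (update (update f r a) (r + 1) b) ⁅⁅w, FreeGroup.of r⁆, FreeGroup.of (r + 1)⁆
      = ⁅⁅FreeGroup.lift f w, a⁆, b⁆ := by
  rw [lift_ocVariety_law, update_self, update_of_ne (by omega), update_self,
    hw.lift_update _ (by omega), hw.lift_update _ le_rfl]

theorem commutatorElement_mul_marginal_left {x : G} (hx : x ∈ marginal (ocVariety w r) G)
    (f : ℕ → G) (a b : G) : ⁅⁅FreeGroup.lift f w, a * x⁆, b⁆ = ⁅⁅FreeGroup.lift f w, a⁆, b⁆ := by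
  have h := hx _ rfl (update (update f r a) (r + 1) b) r
  rwa [update_of_ne (by omega), update_self, update_comm (show r + 1 ≠ r by omega),
    update_idem, lift_update_update_ocVariety_law hw,
    lift_update_update_ocVariety_law hw] at h

theorem commutatorElement_mul_marginal_right {x : G} (hx : x ∈ marginal (ocVariety w r) G)
    (f : ℕ → G) (a b : G) : ⁅⁅FreeGroup.lift f w, a⁆, b * x⁆ = ⁅⁅FreeGroup.lift f w, a⁆, b⁆ := by
  have h := hx _ rfl (update (update f r a) (r + 1) b) (r + 1)
  rwa [update_self, update_idem, lift_update_update_ocVariety_law hw,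
    lift_update_update_ocVariety_law hw] at h

theorem commute_commutatorElement_of_mem_marginal {x : G}
    (hx : x ∈ marginal (ocVariety w r) G) (f : ℕ → G) (a : G) :
    Commute ⁅FreeGroup.lift f w, a⁆ x := by
  rw [← commutatorElement_eq_one_iff_commute]
  simpa using commutatorElement_mul_marginal_right hw hx f a 1

theorem commutatorElement_mem_center_of_mem_marginal {x : G}
    (hx : x ∈ marginal (ocVariety w r) G) (f : ℕ → G) :
    ⁅FreeGroup.lift f w, x⁆ ∈ center G := by
  refine mem_center_iff.2 fun b => (commutatorElement_eq_one_iff_commute.1 ?_).eq.symm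
  simpa using commutatorElement_mul_marginal_left hw hx f 1 b

theorem commute_lift_commutatorElement_of_mem_marginal {μ : G}
    (hμ : μ ∈ marginal (ocVariety w r) G) (f : ℕ → G) (g : G) :
    Commute (FreeGroup.lift f w) ⁅μ, g⁆ := by
  set u := FreeGroup.lift f w
  have hc := mem_center_iff.1 (commutatorElement_mem_center_of_mem_marginal hw hμ f)
  have hd : ∀ ν ∈ marginal (ocVariety w r) G, Commute ⁅u, g⁆ ν :=
    fun ν hν => commute_commutatorElement_of_mem_marginal hw hν f g
  have hμg : ⁅μ, g⁆ ∈ marginal (ocVariety w r) G := by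
    rw [commutatorElement_def, mul_assoc μ, mul_assoc μ]
    exact mul_mem hμ ((marginal_normal _).conj_mem _ (inv_mem hμ) g)
  -- conjugating by `u` multiplies `μ` by the central `⁅u, μ⁆` and `g` by `⁅u, g⁆`
  have hconj : u * ⁅μ, g⁆ * u⁻¹ = ⁅μ, g⁆ :=
    calc u * ⁅μ, g⁆ * u⁻¹
        = ⁅u, μ⁆ * (μ * (⁅u, g⁆ * g) * μ⁻¹) * ⁅u, μ⁆⁻¹ * (⁅u, g⁆ * g)⁻¹ := by
          simp only [commutatorElement_def]; group
      _ = μ * ⁅u, g⁆ * g * μ⁻¹ * g⁻¹ * ⁅u, g⁆⁻¹ := by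
          rw [← hc, mul_inv_cancel_right]; group
      _ = ⁅u, g⁆ * ⁅μ, g⁆ * ⁅u, g⁆⁻¹ := by
          rw [← (hd μ hμ).eq]; simp only [commutatorElement_def]; group
      _ = ⁅μ, g⁆ := by rw [(hd _ hμg).eq, mul_inv_cancel_right]
  exact (eq_mul_inv_iff_mul_eq.1 hconj.symm).symm

theorem verbal_ocVariety_le_centralizer_marginal :
    verbal (ocVariety w r) G ≤ centralizer (marginal (ocVariety w r) G : Set G) := by
  refine (closure_le _).2 fun _ ⟨_, hv, f, hfv⟩ μ hμ => ?_
  rw [← hfv, hv, lift_ocVariety_law]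
  set a := f r
  set b := f (r + 1)
  have hsplit : ⁅⁅FreeGroup.lift f w, a⁆, b⁆
      = ⁅FreeGroup.lift f w, a⁆
        * ⁅FreeGroup.lift (fun i => b * f i * b⁻¹) w, b * a * b⁻¹⁆⁻¹ := by
    rw [FreeGroup.lift_conj]
    simp only [commutatorElement_def]; group
  rw [hsplit]
  exact ((commute_commutatorElement_of_mem_marginal hw hμ f a).symm.mul_right
    (commute_commutatorElement_of_mem_marginal hw hμ _ _).symm.inv_right).eq

end OCVariety

theorem Subgroup.commutator_closure_le_of_le_normalizer {G : Type*} [Group G] {N : Subgroup G}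
    {S T : Set G} (hS : closure S ≤ normalizer (N : Set G))
    (hT : closure T ≤ normalizer (N : Set G))
    (h : ∀ s ∈ S, ∀ t ∈ T, ⁅s, t⁆ ∈ N) : ⁅closure S, closure T⁆ ≤ N := by
  have conj_mem {g : G} (hg : g ∈ normalizer (N : Set G)) {z : G} (hz : z ∈ N) :
      g * z * g⁻¹ ∈ N := (mem_normalizer_iff.1 hg z).1 hz
  rw [commutator_le]
  intro x hx y hy
  induction hx using closure_induction with
  | mem s hs =>
    induction hy using closure_induction with
    | mem t ht => exact h s hs t ht
    | one => simp
    | mul y₁ y₂ hy₁ _ ih₁ ih₂ =>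
      have hsplit : ⁅s, y₁ * y₂⁆ = ⁅s, y₁⁆ * (y₁ * ⁅s, y₂⁆ * y₁⁻¹) := by
        simp only [commutatorElement_def]; group
      rw [hsplit]
      exact mul_mem ih₁ (conj_mem (hT hy₁) ih₂)
    | inv y hy ih =>
      have hsplit : ⁅s, y⁻¹⁆ = y⁻¹ * ⁅s, y⁆⁻¹ * y⁻¹⁻¹ := by
        simp only [commutatorElement_def]; group
      rw [hsplit]
      exact conj_mem (hT (inv_mem hy)) (inv_mem ih)
  | one => simp
  | mul x₁ x₂ hx₁ _ ih₁ ih₂ =>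
    have hsplit : ⁅x₁ * x₂, y⁆ = x₁ * ⁅x₂, y⁆ * x₁⁻¹ * ⁅x₁, y⁆ := by
      simp only [commutatorElement_def]; group
    rw [hsplit]
    exact mul_mem (conj_mem (hS hx₁) ih₂) ih₁
  | inv x hx ih =>
    have hsplit : ⁅x⁻¹, y⁆ = x⁻¹ * ⁅x, y⁆⁻¹ * x⁻¹⁻¹ := by
      simp only [commutatorElement_def]; group
    rw [hsplit]
    exact conj_mem (hS (inv_mem hx)) (inv_mem ih)

section Main

variable {E : Type*} [Group E] {w : FreeGroup ℕ} {r : ℕ} (hw : IsOCWord 0 r w) (B : Subgroup E)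
include hw

theorem sup_marginal_le_normalizer_verbalOn :
    B ⊔ marginal (ocVariety w r) E ≤ normalizer (verbalOn (ocVariety w r) B : Set E) := by
  refine sup_le (le_normalizer_verbalOn _ B) (le_trans ?_ (centralizer_le_normalizer _))
  exact le_centralizer_iff.1
    ((verbalOn_le_verbal _ B).trans (verbal_ocVariety_le_centralizer_marginal hw))

theorem commutatorElement_commutatorElement_mem_verbalOn {f : ℕ → E} (hf : ∀ i, f i ∈ B)
    {p q : E} (hp : p ∈ B ⊔ marginal (ocVariety w r) E)
    (hq : q ∈ B ⊔ marginal (ocVariety w r) E) :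
    ⁅⁅FreeGroup.lift f w, p⁆, q⁆ ∈ verbalOn (ocVariety w r) B := by
  have := marginal_normal (ocVariety w r) (G := E)
  obtain ⟨a, ha, μ, hμ, rfl⟩ := mem_sup_of_normal_right.1 hp
  obtain ⟨b, hb, ν, hν, rfl⟩ := mem_sup_of_normal_right.1 hq
  rw [commutatorElement_mul_marginal_left hw hμ, commutatorElement_mul_marginal_right hw hν]
  refine subset_closure ⟨_, rfl, update (update f r a) (r + 1) b, fun i => ?_,
    lift_update_update_ocVariety_law hw f a b⟩
  simp only [update_apply]
  split_ifs <;> simp_all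

theorem commutatorElement_lift_conj_of_mem_marginal {μ : E}
    (hμ : μ ∈ marginal (ocVariety w r) E) (f : ℕ → E) (g : E) :
    ⁅FreeGroup.lift f w, g⁻¹ * μ * g⁆ = ⁅FreeGroup.lift f w, μ⁆ := by
  have hsplit : g⁻¹ * μ * g = μ * ⁅μ⁻¹, g⁻¹⁆ := by simp only [commutatorElement_def]; group
  rw [hsplit, commutatorElement_mul_right_of_commute
    (commute_lift_commutatorElement_of_mem_marginal hw (inv_mem hμ) f g⁻¹)]

open scoped IsMulCommutative in
theorem commutatorElement_pow_index_sup_mem_verbalOn [B.FiniteIndex] {x : E}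
    (hxM : x ∈ marginal (ocVariety w r) E) (hxV : x ∈ verbal (ocVariety w r) E)
    {f : ℕ → E} (hf : ∀ i, f i ∈ B) :
    ⁅FreeGroup.lift f w, x ^ (B ⊔ marginal (ocVariety w r) E).index⁆
      ∈ verbalOn (ocVariety w r) B := by
  set P := B ⊔ marginal (ocVariety w r) E
  set VB := verbalOn (ocVariety w r) B
  have : P.FiniteIndex := finiteIndex_of_le le_sup_left
  have : (VB.subgroupOf P).Normal := (normal_subgroupOf_iff_le_normalizer
    ((verbalOn_le _ B).trans le_sup_left)).2 (sup_marginal_le_normalizer_verbalOn hw B)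
  let u : P := ⟨FreeGroup.lift f w, mem_sup_left (FreeGroup.lift_mem hf w)⟩
  have hu (p q : P) : ⁅⁅u, p⁆, q⁆ ∈ VB.subgroupOf P :=
    commutatorElement_commutatorElement_mem_verbalOn hw B hf p.2 q.2
  let ϕ := commutatorHomCenter (VB.subgroupOf P) hu
  have hxP : x ∈ P := mem_sup_right hxM
  have hϕ : ϕ ⟨x, hxP⟩ ^ P.index = 1 := by
    refine ϕ.map_pow_index_eq_one_of_mem_commutator hxP
      (verbal_ocVariety_le_commutator hxV) fun k g₀ hk => ?_
    rw [← map_pow]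
    exact Subtype.ext <| congrArg QuotientGroup.mk <| Subtype.ext <|
      commutatorElement_lift_conj_of_mem_marginal hw (pow_mem hxM k) f g₀
  rwa [← map_pow, commutatorHomCenter_eq_one_iff, mem_subgroupOf] at hϕ

theorem commutatorElement_pow_index_mem_verbalOn [B.FiniteIndex] {x : E}
    (hxM : x ∈ marginal (ocVariety w r) E) (hxV : x ∈ verbal (ocVariety w r) E)
    {f : ℕ → E} (hf : ∀ i, f i ∈ B) :
    ⁅FreeGroup.lift f w, x ^ B.index⁆ ∈ verbalOn (ocVariety w r) B := by
  obtain ⟨m, hm⟩ := index_dvd_of_le (le_sup_left : B ≤ B ⊔ marginal (ocVariety w r) E)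
  have hcomm : Commute ⁅FreeGroup.lift f w, x⁆ x :=
    (mem_center_iff.1 (commutatorElement_mem_center_of_mem_marginal hw hxM f) x).symm
  rw [hm, commutatorElement_pow_right_of_commute hcomm, pow_mul,
    ← commutatorElement_pow_right_of_commute hcomm]
  exact pow_mem (commutatorElement_pow_index_sup_mem_verbalOn hw B hxM hxV hf) m

end Main

/-- Lemma 3.3. Let `w` be an outer commutator word of weight `r` and `𝒱`
the variety defined by `[w, x_{r+1}, x_{r+2}]`. Let `B ≤ E` of finite index `n`. If
`x ∈ V*(E) ∩ V(E)` then `[w(y₁,…,y_r), xⁿ] ∈ V(B)` for all `y₁,…,y_r ∈ B`; in particular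
if `L ⊆ V*(E) ∩ V(E)` then `[W(B), Lⁿ] ⊆ V(B)`. -/
theorem stmt2 {E : Type u} [Group E] {w : FreeGroup ℕ} {r : ℕ} (hw : IsOCWord 0 r w)
    (B : Subgroup E) {n : ℕ} (hn : B.index = n) (hn0 : n ≠ 0) :
    (∀ x ∈ marginal (ocVariety w r) E ⊓ verbal (ocVariety w r) E,
      ∀ f : ℕ → E, (∀ i, f i ∈ B) →
        ⁅FreeGroup.lift f w, x ^ n⁆ ∈ verbalOn (ocVariety w r) B) ∧
    (∀ L : Subgroup E, L ≤ marginal (ocVariety w r) E ⊓ verbal (ocVariety w r) E →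
      ⁅verbalOn {w} B, Subgroup.closure ((· ^ n) '' (L : Set E))⁆
        ≤ verbalOn (ocVariety w r) B) := by
  subst hn
  have : B.FiniteIndex := ⟨hn0⟩
  have hmain : ∀ x ∈ marginal (ocVariety w r) E ⊓ verbal (ocVariety w r) E,
      ∀ f : ℕ → E, (∀ i, f i ∈ B) →
        ⁅FreeGroup.lift f w, x ^ B.index⁆ ∈ verbalOn (ocVariety w r) B :=
    fun x hx _ hf => commutatorElement_pow_index_mem_verbalOn hw B (mem_inf.1 hx).1
      (mem_inf.1 hx).2 hf
  have hnorm := sup_marginal_le_normalizer_verbalOn hw B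
  refine ⟨hmain, fun L hL => commutator_closure_le_of_le_normalizer ?_ ?_ ?_⟩
  · exact (verbalOn_le _ B).trans (le_sup_left.trans hnorm)
  · refine (closure_le _).2 fun _ ⟨y, hy, hyn⟩ => hnorm (mem_sup_right ?_)
    exact hyn ▸ pow_mem (mem_inf.1 (hL hy)).1 _
  · rintro _ ⟨_, rfl, f, hf, rfl⟩ _ ⟨y, hy, rfl⟩
    exact hmain y (hL hy) f hf
end

section
/- Let w = w(x₁,…,x_r) be an outer commutator word and let 𝒱 be the variety of groups defined by the single word [w(x₁,…,x_r), x_{r+1}, x_{r+2}]. Let G be a finite group with a VP cover 1 → L → G* → G → 1, and let H be a subgroup of G of index n with H ≅ B/L for some subgroup B of G* containing L. Let d be the exponent of [W(B), L] and e the exponent of 𝒱B̃₀(H), where W(B) is the verbal subgroup of B with respect to w. Then d divides n·e. -/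
/-! Common framework: varieties of groups, verbal and marginal subgroups,
word values, the `B̃₀`-invariant of a group with respect to a variety. -/

universe u v

open scoped commutatorElement

/-! Fix a `w`-value `b` on a tuple from `B` and `ℓ ∈ L`. Since `L` is marginal for
`[w, x, y]`, the commutator `[b, ℓ]` is central and does not change when `ℓ` is replaced by a
conjugate. Hence `y ↦ [b, y]` is a homomorphism from `B` to the centre of `B / V(B)`. Its
transfer from `G*` kills `L ≤ V(G*)`, because the target is abelian and the values of
`[w, x, y]` are commutators; on the other hand `ℓ` fixes every coset of `B`, so the transfer
of `ℓ` is `[b, ℓ]^n`. Thus `[b, ℓ]^n ∈ V(B) ∩ L`.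

A section of `G* → G` over `H` turns the free presentation `F → H` into a map `F → G*` sending
`V(F)` onto a subgroup containing `V(B)`, while the VP property forces it to kill
`⟨T(F) ∩ R⟩`. So every element of `V(B) ∩ L` is the image of an element of `R ∩ V(F)` whose
`e`-th power dies, and `[b, ℓ]^(n e) = 1`. The central elements of order dividing `n e` form a
normal subgroup containing every such `[b, ℓ]`, hence containing `[W(B), L]`. -/

open Function

theorem FreeGroup.map_lift_apply {α β γ : Type*} [Group β] [Group γ] (φ : β →* γ)
    (f : α → β) (x : FreeGroup α) : φ (FreeGroup.lift f x) = FreeGroup.lift (φ ∘ f) x :=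
  FreeGroup.lift_unique (φ.comp (FreeGroup.lift f)) (by simp)

theorem Subgroup.commutator_closure_le {G : Type*} [Group G] {S : Set G} {K N : Subgroup G}
    [hN : N.Normal] (h : ∀ s ∈ S, ∀ k ∈ K, ⁅s, k⁆ ∈ N) : ⁅Subgroup.closure S, K⁆ ≤ N := by
  rw [Subgroup.commutator_le]
  intro x hx k hk
  induction hx using Subgroup.closure_induction with
  | mem s hs => exact h s hs k hk
  | one => simp
  | mul x y _ _ hx hy =>
    rw [commutatorElement_mul_left_eq_conj_mul]
    exact mul_mem (hN.conj_mem _ hy x) hx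
  | inv x _ hx =>
    rw [commutatorElement_inv_left, ← commutatorElement_inv]
    simpa using hN.conj_mem _ (inv_mem hx) x⁻¹

def Subgroup.centralPowKer (G : Type*) [Group G] (m : ℕ) : Subgroup G where
  carrier := {z | z ∈ Subgroup.center G ∧ z ^ m = 1}
  one_mem' := ⟨one_mem _, one_pow m⟩
  mul_mem' {a b} ha hb := by
    refine ⟨mul_mem ha.1 hb.1, ?_⟩
    have hab : Commute a b := Subgroup.mem_center_iff.mp hb.1 a
    rw [hab.mul_pow, ha.2, hb.2, one_mul]
  inv_mem' ha := ⟨inv_mem ha.1, by rw [inv_pow, ha.2, inv_one]⟩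

instance Subgroup.centralPowKer_normal (G : Type*) [Group G] (m : ℕ) :
    (Subgroup.centralPowKer G m).Normal where
  conj_mem z hz g := by
    rwa [Subgroup.mem_center_iff.mp hz.1 g, mul_inv_cancel_right]

def commutatorHomOfMemCenter {G : Type*} [Group G] (b : G)
    (hb : ∀ y, ⁅b, y⁆ ∈ Subgroup.center G) : G →* Subgroup.center G where
  toFun y := ⟨⁅b, y⁆, hb y⟩
  map_one' := Subtype.ext (commutatorElement_one_right b)
  map_mul' y z := Subtype.ext <| by
    change ⁅b, y * z⁆ = ⁅b, y⁆ * ⁅b, z⁆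
    rw [commutatorElement_mul_right_eq_mul_conj, mul_assoc _ y,
      Subgroup.mem_center_iff.mp (hb z) y, ← mul_assoc, mul_inv_cancel_right]

theorem MonoidHom.transfer_eq_pow_index_of_mem_normalCore {G A : Type*} [Group G]
    [CommGroup A] {H : Subgroup G} [H.FiniteIndex] (φ : H →* A) {g : G}
    (hg : g ∈ H.normalCore)
    (hφ : ∀ x : G, ∀ hx : x⁻¹ * g * x ∈ H, φ ⟨x⁻¹ * g * x, hx⟩ = φ ⟨g, H.normalCore_le hg⟩) :
    φ.transfer g = φ ⟨g, H.normalCore_le hg⟩ ^ H.index := by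
  classical
  have : Fintype (Quotient (MulAction.orbitRel (Subgroup.zpowers g) (G ⧸ H))) :=
    Fintype.ofFinite _
  have hfix : ∀ q : G ⧸ H, minimalPeriod (g • ·) q = 1 := fun q =>
    minimalPeriod_eq_one_iff_isFixedPt.mpr <| by
      rw [H.normalCore_eq_ker] at hg
      exact Equiv.Perm.ext_iff.mp hg q
  rw [H.index_eq_sum_minimalPeriod g, ← Finset.prod_pow_eq_pow_sum,
    transfer_eq_prod_quotient_orbitRel_zpowers_quot]
  refine Finset.prod_congr rfl fun q _ => ?_
  simp only [hfix, pow_one]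
  exact hφ _ _

instance verbal_normal (V : Set (FreeGroup ℕ)) (G : Type*) [Group G] : (verbal V G).Normal :=
  Subgroup.closure_normal_of_conj fun c _ hg => wordValues_conj_mem c hg

section VerbalMarginal

variable {V : Set (FreeGroup ℕ)} {G : Type*} [Group G]

theorem map_subtype_verbal_le_verbalOn (B : Subgroup G) :
    (verbal V B).map B.subtype ≤ verbalOn V B := by
  rw [verbal, MonoidHom.map_closure]
  refine Subgroup.closure_mono ?_
  rintro _ ⟨_, ⟨v, hv, f, rfl⟩, rfl⟩
  exact ⟨v, hv, B.subtype ∘ f, fun i => (f i).2, (FreeGroup.map_lift_apply B.subtype f v).symm⟩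

theorem pow_exponent_vB0_mem_vB0Den {x : FreeGroup G} (hx : x ∈ vB0Num V G) :
    x ^ Monoid.exponent (vB0 V G) ∈ vB0Den V G := by
  have h := Monoid.pow_exponent_eq_one (QuotientGroup.mk ⟨x, hx⟩ : vB0 V G)
  rw [← QuotientGroup.mk_pow, QuotientGroup.eq_one_iff, Subgroup.mem_subgroupOf] at h
  exact h

theorem lift_eq_of_inv_mul_mem_marginal_of_forall_notMem {v : FreeGroup ℕ} (hv : v ∈ V)
    (s : Finset ℕ) {f g : ℕ → G} (hs : ∀ i ∉ s, f i = g i)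
    (hm : ∀ i, (f i)⁻¹ * g i ∈ marginal V G) : FreeGroup.lift f v = FreeGroup.lift g v := by
  induction s using Finset.induction_on generalizing f with
  | empty => rw [funext fun i => hs i (Finset.notMem_empty i)]
  | insert a s _ ih =>
    have hstep : FreeGroup.lift (update f a (g a)) v = FreeGroup.lift f v := by
      simpa using hm a v hv f a
    rw [← hstep]
    refine ih (fun i hi => ?_) fun i => ?_
    · rcases eq_or_ne i a with rfl | hia
      · simp
      · rw [update_of_ne hia]
        exact hs i (by simp [hia, hi])
    · rcases eq_or_ne i a with rfl | hia
      · simp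
      · simpa [update_of_ne hia] using hm i

end VerbalMarginal

namespace IsOCWord

theorem lt {a b : ℕ} {w : FreeGroup ℕ} (h : IsOCWord a b w) : a < b := by
  induction h with
  | var i => exact Nat.lt_succ_self i
  | comm _ _ ih₁ ih₂ => exact ih₁.trans ih₂

theorem lift_congr {a b : ℕ} {w : FreeGroup ℕ} (h : IsOCWord a b w) {G : Type*} [Group G]
    {f g : ℕ → G} (hfg : ∀ i, a ≤ i → i < b → f i = g i) :
    FreeGroup.lift f w = FreeGroup.lift g w := by
  induction h with
  | var i => simpa using hfg i le_rfl (Nat.lt_succ_self i)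
  | comm h₁ h₂ ih₁ ih₂ =>
    rw [map_commutatorElement, map_commutatorElement,
      ih₁ fun i hi hib => hfg i hi (hib.trans h₂.lt),
      ih₂ fun i hi hic => hfg i (h₁.lt.le.trans hi) hic]

theorem lift_eq_of_inv_mul_mem_marginal {V : Set (FreeGroup ℕ)} {G : Type*} [Group G]
    {a b : ℕ} {v : FreeGroup ℕ} (hvw : IsOCWord a b v) (hv : v ∈ V) {f g : ℕ → G}
    (hm : ∀ i, (f i)⁻¹ * g i ∈ marginal V G) : FreeGroup.lift f v = FreeGroup.lift g v := by
  classical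
  calc FreeGroup.lift f v = FreeGroup.lift (fun i => if i < b then g i else f i) v :=
        lift_eq_of_inv_mul_mem_marginal_of_forall_notMem hv (Finset.range b)
          (fun i hi => by simp_all) fun i => by
            split_ifs
            · exact hm i
            · simp
    _ = FreeGroup.lift g v := hvw.lift_congr fun i _ hi => by simp [hi]

theorem commutator_commutator {r : ℕ} {w : FreeGroup ℕ} (hw : IsOCWord 0 r w) :
    IsOCWord 0 (r + 2) ⁅⁅w, FreeGroup.of r⁆, FreeGroup.of (r + 1)⁆ :=
  .comm (.comm hw (.var r)) (.var (r + 1))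

theorem lift_commutator_commutator_update {r : ℕ} {w : FreeGroup ℕ} (hw : IsOCWord 0 r w)
    {G : Type*} [Group G] (f : ℕ → G) (x y : G) :
    FreeGroup.lift (update (update f r x) (r + 1) y) ⁅⁅w, FreeGroup.of r⁆, FreeGroup.of (r + 1)⁆
      = ⁅⁅FreeGroup.lift f w, x⁆, y⁆ := by
  have hw' : FreeGroup.lift (update (update f r x) (r + 1) y) w = FreeGroup.lift f w :=
    hw.lift_congr fun i _ hi => by
      rw [update_of_ne (by omega), update_of_ne hi.ne]
  simp [map_commutatorElement, hw']

end IsOCWord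

section OCVariety

variable {G : Type*} [Group G] {w : FreeGroup ℕ} {r : ℕ} {ℓ : G}

theorem commutator_commutator_mul_left_of_mem_marginal (hw : IsOCWord 0 r w) (f : ℕ → G)
    (x y : G) (hℓ : ℓ ∈ marginal (ocVariety w r) G) :
    ⁅⁅FreeGroup.lift f w, x * ℓ⁆, y⁆ = ⁅⁅FreeGroup.lift f w, x⁆, y⁆ := by
  have h := hℓ _ rfl (update (update f r x) (r + 1) y) r
  rwa [update_of_ne (by omega), update_self, update_comm (by omega), update_idem,
    hw.lift_commutator_commutator_update, hw.lift_commutator_commutator_update] at h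

theorem commutator_commutator_mul_right_of_mem_marginal (hw : IsOCWord 0 r w) (f : ℕ → G)
    (x y : G) (hℓ : ℓ ∈ marginal (ocVariety w r) G) :
    ⁅⁅FreeGroup.lift f w, x⁆, y * ℓ⁆ = ⁅⁅FreeGroup.lift f w, x⁆, y⁆ := by
  have h := hℓ _ rfl (update (update f r x) (r + 1) y) (r + 1)
  rwa [update_self, update_idem, hw.lift_commutator_commutator_update,
    hw.lift_commutator_commutator_update] at h

theorem commutator_mem_center_of_mem_marginal (hw : IsOCWord 0 r w) (f : ℕ → G)
    (hℓ : ℓ ∈ marginal (ocVariety w r) G) : ⁅FreeGroup.lift f w, ℓ⁆ ∈ Subgroup.center G := by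
  refine Subgroup.mem_center_iff.mpr fun y => ?_
  have h := commutator_commutator_mul_left_of_mem_marginal hw f 1 y hℓ
  rw [one_mul, commutatorElement_one_right, commutatorElement_one_left,
    commutatorElement_eq_one_iff_mul_comm] at h
  exact h.symm

theorem commute_commutator_of_mem_marginal (hw : IsOCWord 0 r w) (f : ℕ → G) (x : G)
    (hℓ : ℓ ∈ marginal (ocVariety w r) G) : Commute ⁅FreeGroup.lift f w, x⁆ ℓ := by
  have h := commutator_commutator_mul_right_of_mem_marginal hw f x 1 hℓ
  rwa [one_mul, commutatorElement_one_right, commutatorElement_eq_one_iff_commute] at h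

theorem commutator_conj_of_mem_marginal (hw : IsOCWord 0 r w) (f : ℕ → G) (g : G)
    (hℓ : ℓ ∈ marginal (ocVariety w r) G) (hℓ' : g⁻¹ * ℓ * g ∈ marginal (ocVariety w r) G) :
    ⁅FreeGroup.lift f w, g⁻¹ * ℓ * g⁆ = ⁅FreeGroup.lift f w, ℓ⁆ := by
  have hcentral := Subgroup.mem_center_iff.mp (commutator_mem_center_of_mem_marginal hw f hℓ)
  have hcomm := commute_commutator_of_mem_marginal hw f g⁻¹ hℓ'
  set b := FreeGroup.lift f w
  -- expand `⁅b, g⁻¹ * ℓ⁆ = ⁅b, (g⁻¹ * ℓ * g) * g⁻¹⁆` in two ways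
  have h₁ : ⁅b, g⁻¹ * ℓ⁆ = ⁅b, g⁻¹⁆ * ⁅b, ℓ⁆ := by
    rw [commutatorElement_mul_right_eq_mul_conj, mul_assoc _ g⁻¹, hcentral, ← mul_assoc,
      mul_inv_cancel_right]
  have h₂ : ⁅b, g⁻¹ * ℓ * g * g⁻¹⁆ = ⁅b, g⁻¹ * ℓ * g⁆ * ⁅b, g⁻¹⁆ := by
    rw [commutatorElement_mul_right_eq_mul_conj, mul_assoc _ (g⁻¹ * ℓ * g), ← hcomm.eq,
      mul_assoc, mul_inv_cancel_right]
  rw [mul_inv_cancel_right, h₁, hcentral] at h₂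
  exact (mul_right_cancel h₂).symm

theorem commutator_mem_center_quotient_verbal (hw : IsOCWord 0 r w) (f : ℕ → G)
    (y : G ⧸ verbal (ocVariety w r) G) :
    ⁅(FreeGroup.lift f w : G ⧸ verbal (ocVariety w r) G), y⁆ ∈ Subgroup.center _ := by
  induction y using QuotientGroup.induction_on with | _ y
  refine Subgroup.mem_center_iff.mpr fun z => ?_
  induction z using QuotientGroup.induction_on with | _ z
  refine (commutatorElement_eq_one_iff_mul_comm.mp ?_).symm
  rw [← QuotientGroup.mk'_apply, ← QuotientGroup.mk'_apply, ← QuotientGroup.mk'_apply,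
    ← map_commutatorElement, ← map_commutatorElement, QuotientGroup.mk'_apply,
    QuotientGroup.eq_one_iff]
  exact Subgroup.subset_closure ⟨_, rfl, update (update f r y) (r + 1) z,
    hw.lift_commutator_commutator_update f y z⟩

open scoped IsMulCommutative in
theorem commutator_pow_index_mem_verbalOn (hw : IsOCWord 0 r w) {L B : Subgroup G}
    [hL : L.Normal] (hLm : L ≤ marginal (ocVariety w r) G)
    (hLV : L ≤ verbal (ocVariety w r) G) (hLB : L ≤ B) [B.FiniteIndex] {f : ℕ → G}
    (hfB : ∀ i, f i ∈ B) (hℓ : ℓ ∈ L) :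
    ⁅FreeGroup.lift f w, ℓ⁆ ^ B.index ∈ verbalOn (ocVariety w r) B := by
  set fB : ℕ → B := fun i => ⟨f i, hfB i⟩
  have hb : (FreeGroup.lift fB w : G) = FreeGroup.lift f w :=
    FreeGroup.map_lift_apply B.subtype fB w
  set N := verbal (ocVariety w r) B
  set φ := (commutatorHomOfMemCenter _ (commutator_mem_center_quotient_verbal hw fB)).comp
    (QuotientGroup.mk' N)
  have hφ : ∀ y, (φ y : B ⧸ N) = QuotientGroup.mk' N ⁅FreeGroup.lift fB w, y⁆ :=
    fun y => (map_commutatorElement (QuotientGroup.mk' N) _ _).symm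
  have hconj : ∀ x : G, ∀ hx : x⁻¹ * ℓ * x ∈ B, φ ⟨x⁻¹ * ℓ * x, hx⟩ = φ ⟨ℓ, hLB hℓ⟩ := by
    refine fun x hx => Subtype.ext ?_
    rw [hφ, hφ]
    congr 1
    refine Subtype.ext ?_
    change ⁅(FreeGroup.lift fB w : G), x⁻¹ * ℓ * x⁆ = ⁅(FreeGroup.lift fB w : G), ℓ⁆
    rw [hb]
    exact commutator_conj_of_mem_marginal hw f x (hLm hℓ) (hLm (hL.conj_mem' ℓ hℓ x))
  have htransfer : φ.transfer ℓ = 1 := by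
    refine MonoidHom.mem_ker.mp <| (Subgroup.closure_le _).mpr ?_ (hLV hℓ)
    rintro _ ⟨v, rfl, g, rfl⟩
    simp only [SetLike.mem_coe, MonoidHom.mem_ker, map_commutatorElement]
    exact (Commute.all _ _).commutator_eq
  rw [φ.transfer_eq_pow_index_of_mem_normalCore (Subgroup.normal_le_normalCore.mpr hLB hℓ)
    hconj] at htransfer
  have hpow : ⁅FreeGroup.lift fB w, ⟨ℓ, hLB hℓ⟩⁆ ^ B.index ∈ N := by
    rw [← QuotientGroup.eq_one_iff, QuotientGroup.mk_pow, ← QuotientGroup.mk'_apply, ← hφ]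
    exact congrArg Subtype.val htransfer
  have hcoe : ((⁅FreeGroup.lift fB w, ⟨ℓ, hLB hℓ⟩⁆ : B) : G) = ⁅FreeGroup.lift f w, ℓ⁆ := by
    rw [← hb]; rfl
  simpa [hcoe] using map_subtype_verbal_le_verbalOn B ⟨_, hpow, rfl⟩

end OCVariety

section VPExtension

variable {G Q : Type*} [Group G] [Group Q] {w : FreeGroup ℕ} {r : ℕ} {v : FreeGroup ℕ}

theorem lift_eq_of_map_eq (hw : IsOCWord 0 r w) (π : G →* Q)
    (hm : π.ker ≤ marginal (ocVariety w r) G) (hv : v ∈ ocVariety w r) {f g : ℕ → G}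
    (hfg : ∀ i, π (f i) = π (g i)) : FreeGroup.lift f v = FreeGroup.lift g v := by
  obtain rfl : v = _ := hv
  exact hw.commutator_commutator.lift_eq_of_inv_mul_mem_marginal (V := ocVariety w r) rfl
    fun i => hm (by simp [hfg i])

theorem lift_eq_one_of_map_eq_one (hw : IsOCWord 0 r w) (π : G →* Q)
    (hm : π.ker ≤ marginal (ocVariety w r) G) (hlifts : HasVPLifts (ocVariety w r) π)
    (hv : v ∈ ocVariety w r) {f : ℕ → G} (h : π (FreeGroup.lift f v) = 1) :
    FreeGroup.lift f v = 1 := by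
  rw [FreeGroup.map_lift_apply] at h
  obtain ⟨g, hg, hg₁⟩ := hlifts v hv (π ∘ f) h
  rw [lift_eq_of_map_eq hw π hm hv fun i => (hg i).symm, hg₁]

variable {H : Subgroup Q} {σ : FreeGroup H →* G}

theorem vB0Den_le_ker_s6 (hw : IsOCWord 0 r w) (π : G →* Q)
    (hm : π.ker ≤ marginal (ocVariety w r) G) (hlifts : HasVPLifts (ocVariety w r) π)
    (hσ : π.comp σ = H.subtype.comp (presHom H)) : vB0Den (ocVariety w r) H ≤ σ.ker := by
  refine (Subgroup.closure_le _).mpr ?_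
  rintro _ ⟨⟨v, hv, f, rfl⟩, hR⟩
  rw [SetLike.mem_coe, MonoidHom.mem_ker, FreeGroup.map_lift_apply]
  refine lift_eq_one_of_map_eq_one hw π hm hlifts hv ?_
  rw [← FreeGroup.map_lift_apply, ← MonoidHom.comp_apply, hσ, MonoidHom.comp_apply,
    MonoidHom.mem_ker.mp hR, map_one]

theorem verbalOn_le_map_verbal (hw : IsOCWord 0 r w) (π : G →* Q)
    (hm : π.ker ≤ marginal (ocVariety w r) G) (hσ : π.comp σ = H.subtype.comp (presHom H))
    {B : Subgroup G} (hBH : B.map π ≤ H) :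
    verbalOn (ocVariety w r) B ≤ (verbal (ocVariety w r) (FreeGroup H)).map σ := by
  refine (Subgroup.closure_le _).mpr ?_
  rintro _ ⟨v, hv, f, hfB, rfl⟩
  have hfH : ∀ i, π (f i) ∈ H := fun i => hBH ⟨f i, hfB i, rfl⟩
  refine ⟨FreeGroup.lift (fun i => FreeGroup.of ⟨π (f i), hfH i⟩) v,
    Subgroup.subset_closure ⟨v, hv, _, rfl⟩, ?_⟩
  rw [FreeGroup.map_lift_apply]
  refine lift_eq_of_map_eq hw π hm hv fun i => ?_
  simpa [presHom] using DFunLike.congr_fun hσ (FreeGroup.of ⟨π (f i), hfH i⟩)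

theorem pow_exponent_vB0_eq_one_of_mem_verbalOn (hw : IsOCWord 0 r w) {π : G →* Q}
    (hsurj : Surjective π) (hm : π.ker ≤ marginal (ocVariety w r) G)
    (hlifts : HasVPLifts (ocVariety w r) π) {B : Subgroup G} (hBH : B.map π ≤ H) {y : G}
    (hy : y ∈ verbalOn (ocVariety w r) B) (hyL : π y = 1) :
    y ^ Monoid.exponent (vB0 (ocVariety w r) H) = 1 := by
  set σ : FreeGroup H →* G := FreeGroup.lift fun h => surjInv hsurj h
  have hσ : π.comp σ = H.subtype.comp (presHom H) :=
    FreeGroup.ext_hom _ _ fun h => by simp [σ, presHom, surjInv_eq hsurj]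
  obtain ⟨x, hx, rfl⟩ := verbalOn_le_map_verbal hw π hm hσ hBH hy
  have hxR : x ∈ presKer H := by
    have h := DFunLike.congr_fun hσ x
    rw [MonoidHom.comp_apply, hyL] at h
    exact Subtype.ext h.symm
  have h := vB0Den_le_ker_s6 hw π hm hlifts hσ (pow_exponent_vB0_mem_vB0Den ⟨hxR, hx⟩)
  rwa [MonoidHom.mem_ker, map_pow] at h

end VPExtension

theorem stmt6_general {G : Type u} {Gs : Type v} [Group G] [Group Gs]
    {w : FreeGroup ℕ} {r : ℕ} (hw : IsOCWord 0 r w)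
    (L : Subgroup Gs) (π : Gs →* G) (hcover : IsVPCover (ocVariety w r) L π)
    (H : Subgroup G) {n : ℕ} (hn : H.index = n)
    (B : Subgroup Gs) (hLB : L ≤ B) (hBH : B.map π = H)
    {d e : ℕ} (hd : d = Monoid.exponent ↥(⁅verbalOn {w} B, L⁆ : Subgroup Gs))
    (he : e = Monoid.exponent (vB0 (ocVariety w r) ↥H)) :
    d ∣ n * e := by
  obtain ⟨hsurj, rfl, hm, hstem, hlifts, -⟩ := hcover
  subst hn hd he
  have hindex : B.index = H.index := by
    rw [← hBH, ← Subgroup.index_comap_of_surjective _ hsurj, Subgroup.comap_map_eq_self hLB]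
  rcases eq_or_ne H.index 0 with h0 | h0
  · simp [h0]
  have : B.FiniteIndex := ⟨hindex ▸ h0⟩
  have hle : ⁅verbalOn {w} B, π.ker⁆
      ≤ Subgroup.centralPowKer Gs (H.index * Monoid.exponent (vB0 (ocVariety w r) H)) := by
    refine Subgroup.commutator_closure_le ?_
    rintro _ ⟨_, rfl, f, hfB, rfl⟩ ℓ hℓ
    refine ⟨commutator_mem_center_of_mem_marginal hw f (hm hℓ), ?_⟩
    rw [← hindex, pow_mul]
    exact pow_exponent_vB0_eq_one_of_mem_verbalOn hw hsurj hm hlifts hBH.le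
      (commutator_pow_index_mem_verbalOn hw hm hstem hLB hfB hℓ)
      (by simp [map_commutatorElement, MonoidHom.mem_ker.mp hℓ])
  exact Monoid.exponent_dvd_of_forall_pow_eq_one fun x => Subtype.ext (hle x.2).2

/-- Corollary 3.7. With the notation of Theorem 3.4: if `d` is the exponent
of `[W(B), L]` (with `L ≅ 𝒱B̃₀(G)`) and `e` is the exponent of `𝒱B̃₀(H)`, then `d ∣ n·e`. -/
theorem stmt6 {G : Type u} {Gs : Type v} [Group G] [Group Gs] [Finite G]
    {w : FreeGroup ℕ} {r : ℕ} (hw : IsOCWord 0 r w)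
    (L : Subgroup Gs) (π : Gs →* G) (hcover : IsVPCover (ocVariety w r) L π)
    (H : Subgroup G) {n : ℕ} (hn : H.index = n)
    (B : Subgroup Gs) (hLB : L ≤ B) (hBH : B.map π = H)
    {d e : ℕ} (hd : d = Monoid.exponent ↥(⁅verbalOn {w} B, L⁆ : Subgroup Gs))
    (he : e = Monoid.exponent (vB0 (ocVariety w r) ↥H)) :
    d ∣ n * e :=
  stmt6_general hw L π hcover H hn B hLB hBH hd he
end

section
/- Let G be a finite group and H a subgroup of G of index n. Then B̃₀(G)ⁿ, the subgroup of the Bogomolov multiplier B̃₀(G) generated by n-th powers of its elements, is isomorphic to a subgroup of B̃₀(H). -/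
/-! Common framework: varieties of groups, verbal and marginal subgroups,
word values, the `B̃₀`-invariant of a group with respect to a variety. -/

universe u v

open scoped commutatorElement

/-!
Write `F = FreeGroup G`, `R` for the relators and `D = ⟨K(F) ∩ R⟩`. Commutators `[f, r]` with
`r ∈ R` lie in `D`, so `R / D` is central in `F / D`, and `B̃₀(G) = (R ∩ [F, F]) / D` sits in
`R / D ∩ [F / D, F / D]`. Let `S / D` be the preimage of `H` in `F / D`, of index `n`. The
transfer `F / D → (S / D)ᵃᵇ` sends a central element `x` to `x ^ n` and kills commutators, so
`B̃₀(G)ⁿ` lands in `R / D ∩ [S / D, S / D]`. Since `S / D` is generated by the image of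
`FreeGroup H` together with the central `R / D`, its derived subgroup is the image of that of
`FreeGroup H`, and `R / D ∩ [S / D, S / D]` is the image of `B̃₀(H)`. So `B̃₀(G)ⁿ` is a
subquotient of the finite abelian group `B̃₀(H)`, hence embeds into it.
-/

attribute [instance] vB0Den_normal

section GroupTheory

variable {Q : Type*} [Group Q]

open Subgroup

lemma commutatorElement_mul_mem_center {z z' : Q} (hz : z ∈ center Q) (hz' : z' ∈ center Q)
    (a b : Q) : ⁅a * z, b * z'⁆ = ⁅a, b⁆ := by
  have key : ∀ {c} (x y : Q), c ∈ center Q → ⁅x * c, y⁆ = ⁅x, y⁆ := fun x y hc => by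
    rw [commutatorElement_def, commutatorElement_def, mul_assoc x, ← mem_center_iff.mp hc y]
    group
  rw [key _ _ hz, ← commutatorElement_inv, key _ _ hz', commutatorElement_inv]

lemma finite_commutatorSet_of_finiteIndex_center [(center Q).FiniteIndex] :
    Finite (commutatorSet Q) := by
  refine Set.Finite.to_subtype ((Set.finite_range
    fun p : (Q ⧸ center Q) × (Q ⧸ center Q) => ⁅p.1.out, p.2.out⁆).subset ?_)
  rintro _ ⟨a, b, rfl⟩
  obtain ⟨⟨z, hz⟩, ha⟩ := QuotientGroup.mk_out_eq_mul (center Q) a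
  obtain ⟨⟨z', hz'⟩, hb⟩ := QuotientGroup.mk_out_eq_mul (center Q) b
  exact ⟨(a, b), by simp only [ha, hb, commutatorElement_mul_mem_center hz hz']⟩

lemma commutator_sup_le_of_le_center {T Z : Subgroup Q} (hZ : Z ≤ center Q) :
    ⁅T ⊔ Z, T ⊔ Z⁆ ≤ ⁅T, T⁆ := by
  have : Z.Normal := ⟨fun z hz g => by rwa [mem_center_iff.mp (hZ hz) g, mul_inv_cancel_right]⟩
  rw [commutator_le]
  intro g hg g' hg'
  rw [← SetLike.mem_coe, mul_normal] at hg hg'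
  obtain ⟨t, ht, z, hz, rfl⟩ := hg
  obtain ⟨t', ht', z', hz', rfl⟩ := hg'
  rw [commutatorElement_mul_mem_center (hZ hz) (hZ hz')]
  exact commutator_mem_commutator ht ht'

lemma pow_index_mem_commutator_of_mem_center (S : Subgroup Q) [S.FiniteIndex] {x : Q}
    (hxz : x ∈ center Q) (hxc : x ∈ commutator Q) : x ^ S.index ∈ ⁅S, S⁆ := by
  have htransfer := MonoidHom.transfer_eq_pow (Abelianization.of : S →* Abelianization S) x
    fun k g _ => by rw [mul_assoc, ← mem_center_iff.mp (pow_mem hxz k) g, inv_mul_cancel_left]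
  have hker := Abelianization.commutator_subset_ker
    (MonoidHom.transfer (Abelianization.of : S →* Abelianization S)) hxc
  rw [MonoidHom.mem_ker, htransfer] at hker
  rw [← map_subtype_commutator]
  exact ⟨_, (QuotientGroup.eq_one_iff _).mp hker, rfl⟩

open scoped IsMulCommutative in
lemma exists_injective_quotient {A : Type*} [Group A] [IsMulCommutative A] [Finite A]
    (N : Subgroup A) : ∃ ψ : A ⧸ N →* A, Function.Injective ψ := by
  obtain ⟨e⟩ := CommGroup.monoidHom_mulEquiv_of_hasEnoughRootsOfUnity (A ⧸ N) Circle
  obtain ⟨e'⟩ := CommGroup.monoidHom_mulEquiv_of_hasEnoughRootsOfUnity A Circle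
  have hdual : Function.Injective ((QuotientGroup.mk' N).compHom' : _ →* (A →* Circleˣ)) :=
    fun _ _ h => (MonoidHom.cancel_right (QuotientGroup.mk'_surjective N)).mp h
  exact ⟨e'.toMonoidHom.comp ((QuotientGroup.mk' N).compHom'.comp e.symm.toMonoidHom),
    e'.injective.comp (hdual.comp e.symm.injective)⟩

lemma exists_injective_of_range_le {A P : Type*} [Group A] [IsMulCommutative A] [Finite A]
    [Group P] (f : A →* Q) (j : P →* Q) (hj : Function.Injective j)
    (h : j.range ≤ f.range) : ∃ ψ : P →* A, Function.Injective ψ := by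
  let Y := j.range.comap f
  let fY : Y →* j.range := (f.comp Y.subtype).codRestrict _ fun y => y.2
  have hfY : Function.Surjective fY := fun ⟨q, hq⟩ => by
    obtain ⟨a, rfl⟩ := h hq
    exact ⟨⟨a, hq⟩, rfl⟩
  obtain ⟨ψ, hψ⟩ := exists_injective_quotient fY.ker
  let e : P ≃* Y ⧸ fY.ker :=
    (MonoidHom.ofInjective hj).trans (QuotientGroup.quotientKerEquivOfSurjective fY hfY).symm
  exact ⟨Y.subtype.comp (ψ.comp e.toMonoidHom), Y.subtype_injective.comp (hψ.comp e.injective)⟩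

end GroupTheory

section Presentation

variable {X Y : Type*} [Group X] [Group Y]

lemma presHom_surjective : Function.Surjective (presHom X) :=
  fun x => ⟨FreeGroup.of x, FreeGroup.lift_apply_of⟩

lemma presHom_comp_map (f : X →* Y) :
    (presHom Y).comp (FreeGroup.map f) = f.comp (presHom X) := by
  ext x
  simp [presHom]

lemma map_mem_wordValues {V : Set (FreeGroup ℕ)} (f : X →* Y) {g : X}
    (hg : g ∈ wordValues V X) : f g ∈ wordValues V Y := by
  obtain ⟨v, hv, a, rfl⟩ := hg
  refine ⟨v, hv, f ∘ a, ?_⟩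
  rw [← MonoidHom.comp_apply]
  congr 1
  ext
  simp

lemma vB0Den_le_presKer (V : Set (FreeGroup ℕ)) : vB0Den V X ≤ presKer X :=
  (Subgroup.closure_le _).mpr fun _ hw => hw.2

lemma vB0Den_le_comap (V : Set (FreeGroup ℕ)) (f : X →* Y) :
    vB0Den V X ≤ (vB0Den V Y).comap (FreeGroup.map f) := by
  refine (Subgroup.closure_le _).mpr fun w ⟨hw, hR⟩ => Subgroup.subset_closure
    ⟨map_mem_wordValues _ hw, ?_⟩
  change (presHom Y).comp (FreeGroup.map f) w = 1
  rw [presHom_comp_map, MonoidHom.comp_apply, MonoidHom.mem_ker.mp hR, map_one]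

end Presentation

namespace vB0

variable (V : Set (FreeGroup ℕ)) (X : Type*) [Group X]

def toQuotient : vB0 V X →* FreeGroup X ⧸ vB0Den V X :=
  QuotientGroup.lift _ ((QuotientGroup.mk' _).comp (vB0Num V X).subtype) fun _ hx =>
    (QuotientGroup.eq_one_iff _).mpr (Subgroup.mem_subgroupOf.mp hx)

lemma toQuotient_injective : Function.Injective (toQuotient V X) := by
  refine (injective_iff_map_eq_one _).mpr fun a ha => ?_
  obtain ⟨w, rfl⟩ := QuotientGroup.mk_surjective a
  exact (QuotientGroup.eq_one_iff w).mpr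
    (Subgroup.mem_subgroupOf.mpr ((QuotientGroup.eq_one_iff _).mp ha))

lemma range_toQuotient :
    (toQuotient V X).range = (vB0Num V X).map (QuotientGroup.mk' _) := by
  ext q
  constructor
  · rintro ⟨a, rfl⟩
    obtain ⟨w, rfl⟩ := QuotientGroup.mk_surjective a
    exact ⟨w, w.2, rfl⟩
  · rintro ⟨w, hw, rfl⟩
    exact ⟨QuotientGroup.mk ⟨w, hw⟩, rfl⟩

end vB0

section CommutatorWord

variable {X : Type*} [Group X]

lemma commutatorElement_mem_wordValues (a b : X) : ⁅a, b⁆ ∈ wordValues commutatorWord X := by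
  refine ⟨⁅FreeGroup.of 0, FreeGroup.of 1⁆, rfl, fun i => if i = 0 then a else b, ?_⟩
  simp [map_commutatorElement]

lemma wordValues_commutatorWord : wordValues commutatorWord X = commutatorSet X := by
  ext g
  constructor
  · rintro ⟨v, rfl, f, rfl⟩
    exact ⟨f 0, f 1, by simp [map_commutatorElement]⟩
  · rintro ⟨a, b, rfl⟩
    exact commutatorElement_mem_wordValues a b

lemma verbal_commutatorWord : verbal commutatorWord X = commutator X := by
  rw [verbal, wordValues_commutatorWord, commutator_eq_closure]

end CommutatorWord

/-- The group `F / ⟨K(F) ∩ R⟩` of the canonical presentation `F = FreeGroup X`. -/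
abbrev FreeQuot (X : Type*) [Group X] : Type _ := FreeGroup X ⧸ vB0Den commutatorWord X

namespace FreeQuot

variable (X : Type*) {Y : Type*} [Group X] [Group Y]

def ofB0tilde : B0tilde X →* FreeQuot X := vB0.toQuotient commutatorWord X

lemma ofB0tilde_injective : Function.Injective (ofB0tilde X) := vB0.toQuotient_injective _ X

def proj : FreeQuot X →* X := QuotientGroup.lift _ (presHom X) (vB0Den_le_presKer _)

variable {X} in
def map (f : X →* Y) : FreeQuot X →* FreeQuot Y :=
  QuotientGroup.map _ _ (FreeGroup.map f) (vB0Den_le_comap _ f)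

lemma proj_surjective : Function.Surjective (proj X) := fun x =>
  let ⟨w, hw⟩ := presHom_surjective x
  ⟨w, hw⟩

variable {X} in
lemma proj_comp_map (f : X →* Y) : (proj Y).comp (map f) = f.comp (proj X) := by
  ext
  simp [proj, map, presHom]

lemma ker_proj_le_center : (proj X).ker ≤ Subgroup.center (FreeQuot X) := by
  intro q hq
  obtain ⟨r, rfl⟩ := QuotientGroup.mk'_surjective _ q
  replace hq : presHom X r = 1 := hq
  refine Subgroup.mem_center_iff.mpr fun p => ?_
  obtain ⟨f, rfl⟩ := QuotientGroup.mk'_surjective _ p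
  have hcomm : ⁅f, r⁆ ∈ vB0Den commutatorWord X := by
    refine Subgroup.subset_closure ⟨commutatorElement_mem_wordValues f r, ?_⟩
    change presHom X ⁅f, r⁆ = 1
    rw [map_commutatorElement, hq, commutatorElement_one_right]
  rw [← commutatorElement_eq_one_iff_mul_comm, ← map_commutatorElement]
  exact (QuotientGroup.eq_one_iff _).mpr hcomm

lemma commutator_eq_map : commutator (FreeQuot X) =
    (commutator (FreeGroup X)).map (QuotientGroup.mk' _) := by
  rw [map_commutator_eq, MonoidHom.range_eq_top_of_surjective _ (QuotientGroup.mk'_surjective _),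
    commutator_def]

lemma range_ofB0tilde : (ofB0tilde X).range = (proj X).ker ⊓ commutator (FreeQuot X) := by
  rw [show (ofB0tilde X).range = _ from vB0.range_toQuotient commutatorWord X, commutator_eq_map]
  apply le_antisymm
  · rintro _ ⟨w, ⟨hR, hC⟩, rfl⟩
    exact ⟨hR, w, by rwa [← verbal_commutatorWord], rfl⟩
  · rintro _ ⟨hR, c, hc, rfl⟩
    exact ⟨c, ⟨hR, by rwa [verbal_commutatorWord]⟩, rfl⟩

lemma ker_proj_inf_commutator_comap_le_range (H : Subgroup X) :
    (proj X).ker ⊓ ⁅H.comap (proj X), H.comap (proj X)⁆ ≤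
      ((map H.subtype).comp (ofB0tilde H)).range := by
  have hH : (map H.subtype).range.map (proj X) = H := by
    rw [← MonoidHom.range_comp, proj_comp_map, MonoidHom.range_comp,
      MonoidHom.range_eq_top_of_surjective _ (proj_surjective H), ← MonoidHom.range_eq_map,
      Subgroup.range_subtype]
  rintro x ⟨hxR, hxS⟩
  rw [← hH, Subgroup.comap_map_eq] at hxS
  obtain ⟨y, hy, rfl⟩ : x ∈ (commutator (FreeQuot H)).map (map H.subtype) := by
    rw [map_commutator_eq]
    exact commutator_sup_le_of_le_center (ker_proj_le_center X) hxS
  have hyR : y ∈ (proj H).ker := by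
    rw [MonoidHom.mem_ker, ← H.subtype_injective.eq_iff, map_one, ← MonoidHom.comp_apply,
      ← proj_comp_map, MonoidHom.comp_apply]
    exact hxR
  obtain ⟨b, rfl⟩ := (range_ofB0tilde H).ge ⟨hyR, hy⟩
  exact ⟨b, rfl⟩

end FreeQuot

instance (X : Type*) [Group X] : IsMulCommutative (B0tilde X) :=
  ⟨⟨fun a b => FreeQuot.ofB0tilde_injective X <| by
    simpa only [map_mul] using Subgroup.mem_center_iff.mp (FreeQuot.ker_proj_le_center X
      ((FreeQuot.range_ofB0tilde X).le ⟨b, rfl⟩).1) (FreeQuot.ofB0tilde X a)⟩⟩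

instance (X : Type*) [Group X] [Finite X] : Finite (B0tilde X) := by
  have : (Subgroup.center (FreeQuot X)).FiniteIndex :=
    Subgroup.finiteIndex_of_le (FreeQuot.ker_proj_le_center X)
  have := finite_commutatorSet_of_finiteIndex_center (Q := FreeQuot X)
  exact Finite.of_injective
    (fun b => (⟨_, ((FreeQuot.range_ofB0tilde X).le ⟨b, rfl⟩).2⟩ : commutator (FreeQuot X)))
    fun a b h => FreeQuot.ofB0tilde_injective X (congrArg Subtype.val h)

/-- Jezernik–Moravec. Let `G` be a finite group and `H ≤ G` of index `n`.
Then `B̃₀(G)ⁿ`, the subgroup of the Bogomolov multiplier generated by `n`-th powers, is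
isomorphic to a subgroup of `B̃₀(H)`. -/
theorem stmt14 {G : Type u} [Group G] [Finite G] (H : Subgroup G) {n : ℕ}
    (hn : H.index = n) :
    ∃ φ : ↥(Subgroup.closure (Set.range (fun x : B0tilde G => x ^ n))) →* B0tilde ↥H,
      Function.Injective φ := by
  set S := H.comap (FreeQuot.proj G)
  have hS : S.index = H.index := H.index_comap_of_surjective (FreeQuot.proj_surjective G)
  have : S.FiniteIndex := ⟨hS ▸ Subgroup.FiniteIndex.index_ne_zero⟩
  refine exists_injective_of_range_le ((FreeQuot.map H.subtype).comp (FreeQuot.ofB0tilde H))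
    ((FreeQuot.ofB0tilde G).comp (Subgroup.subtype _))
    ((FreeQuot.ofB0tilde_injective G).comp Subtype.val_injective) ?_
  rw [MonoidHom.range_comp, Subgroup.range_subtype, MonoidHom.map_closure, Subgroup.closure_le]
  rintro _ ⟨_, ⟨x, rfl⟩, rfl⟩
  have hx := (FreeQuot.range_ofB0tilde G).le ⟨x, rfl⟩
  show FreeQuot.ofB0tilde G (x ^ n) ∈ _
  rw [map_pow, ← hn, ← hS]
  refine FreeQuot.ker_proj_inf_commutator_comap_le_range G H ⟨pow_mem hx.1 _, ?_⟩
  exact pow_index_mem_commutator_of_mem_center S (FreeQuot.ker_proj_le_center G hx.1) hx.2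
end
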